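/- For α ∈ M, the degree gr(α) equals the largest integer k such that there exists a chain α = α_k > α_{k−1} > ⋯ > α₀ in M. -/
import Mathlib


open Function

/-- The set `S = (ℕ × ℕ) × {1,…,n}`, a disjoint union of `n` quadrants. -/
abbrev QSet (n : ℕ) := (ℕ × ℕ) × Fin n

/-- The translation of `S` with parameters `m : Fin n → ℕ`, shifting the `i`-th quadrant
diagonally by `m i`. -/
def translMap {n : ℕ} (m : Fin n → ℕ) : QSet n → QSet n :=
  fun p => ((p.1.1 + m p.2, p.1.2 + m p.2), p.2)

/-- The generator `tᵢ` of the translation monoid `T`: diagonal shift by `1` on quadrant `Qᵢ`,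
identity elsewhere. -/
def tgen {n : ℕ} (i : Fin n) : QSet n → QSet n :=
  translMap (fun j => if j = i then 1 else 0)

/-- The defining conditions of the monoid `M`: `g` is injective, eventually a diagonal
translation on each quadrant (B₁), and maps each vertical (resp. horizontal) half-line
order-preservingly onto a shifted vertical (resp. horizontal) half-line (B₂(a), B₂(b)). -/
def MCond {n : ℕ} (g : QSet n → QSet n) : Prop :=
  Function.Injective g ∧
  ∃ (x₀ y₀ : ℕ) (m : Fin n → ℤ),
    (∀ (x y : ℕ) (i : Fin n), x₀ ≤ x → y₀ ≤ y →
      (g ((x, y), i)).2 = i ∧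
      ((g ((x, y), i)).1.1 : ℤ) = (x : ℤ) + m i ∧
      ((g ((x, y), i)).1.2 : ℤ) = (y : ℤ) + m i) ∧
    (∀ (x : ℕ) (i : Fin n), ∃ (q : ℤ) (x' : ℕ) (i' : Fin n),
      ∀ y : ℕ, y₀ ≤ y →
        (g ((x, y), i)).1.1 = x' ∧ (g ((x, y), i)).2 = i' ∧
        ((g ((x, y), i)).1.2 : ℤ) = (y : ℤ) + q) ∧
    (∀ (y : ℕ) (i : Fin n), ∃ (r : ℤ) (y' : ℕ) (i' : Fin n),
      ∀ x : ℕ, x₀ ≤ x →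
        (g ((x, y), i)).1.2 = y' ∧ (g ((x, y), i)).2 = i' ∧
        ((g ((x, y), i)).1.1 : ℤ) = (x : ℤ) + r)

/-- The monoid `M` of injective self-maps of `S` satisfying B₁ and B₂. -/
def MMon (n : ℕ) := {g : QSet n → QSet n // MCond g}

/-- The order on `M`: `α ≤ β` iff `β = t α` for some translation `t ∈ T`
(maps act on the right, so `t α` means "first `t`, then `α`"). -/
def Mle {n : ℕ} (α β : MMon n) : Prop :=
  ∃ m : Fin n → ℕ, ∀ s, α.1 (translMap m s) = β.1 s

/-- The strict order on `M`. -/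
def Mlt {n : ℕ} (α β : MMon n) : Prop := Mle α β ∧ α ≠ β

/-- The degree `gr(α)`: the number of vertical half-lines occurring in the canonical
decomposition of `S - Sα`, i.e. the number of `(x,i)` such that the vertical half-line over
`(x,i)` eventually avoids the image of `α`. -/
noncomputable def gr {n : ℕ} (α : QSet n → QSet n) : ℕ :=
  Nat.card {p : ℕ × Fin n // ∃ N : ℕ, ∀ y : ℕ, N ≤ y → ((p.1, y), p.2) ∉ Set.range α}

section Aux
variable {n : ℕ}

/-- The set of vertical half-lines eventually missing from the range of `α`. -/
def MissV (α : QSet n → QSet n) : Set (ℕ × Fin n) :=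
  {p | ∃ N : ℕ, ∀ y : ℕ, N ≤ y → ((p.1, y), p.2) ∉ Set.range α}

/-- The set of horizontal half-lines eventually missing from the range of `α`. -/
def MissH (α : QSet n → QSet n) : Set (ℕ × Fin n) :=
  {p | ∃ N : ℕ, ∀ x : ℕ, N ≤ x → ((x, p.1), p.2) ∉ Set.range α}

lemma gr_eq_ncard (α : QSet n → QSet n) : gr α = (MissV α).ncard := rfl

/-- Counting lemma: an injection of `ℕ × Fin n` into itself which is eventually a translation
by `m i` on the `i`-th copy has finite complement of cardinality `∑ i, m i`. -/
lemma compl_card (φ : ℕ × Fin n → ℕ × Fin n) (hinj : Function.Injective φ)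
    (x₀ : ℕ) (m : Fin n → ℤ)
    (hev : ∀ x i, x₀ ≤ x → ((φ (x, i)).1 : ℤ) = (x : ℤ) + m i ∧ (φ (x, i)).2 = i) :
    (Set.range φ)ᶜ.Finite ∧ (((Set.range φ)ᶜ.ncard : ℤ) = ∑ i, m i) := by
  classical
  set M₀ : ℕ := Finset.univ.sup (fun i => (m i).natAbs) with hM₀
  have hm_le : ∀ i : Fin n, (m i).natAbs ≤ M₀ := fun i => by rw [hM₀]; exact Finset.le_sup (f := fun j => (m j).natAbs) (Finset.mem_univ i)
  set J : ℕ := ((Finset.range x₀ ×ˢ (Finset.univ : Finset (Fin n))).sup fun p => (φ p).1) with hJ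
  have hJ_le : ∀ x i, x < x₀ → (φ (x, i)).1 ≤ J := by
    intro x i hx
    have hmem : (x, i) ∈ Finset.range x₀ ×ˢ (Finset.univ : Finset (Fin n)) := by
      simp [Finset.mem_product, Finset.mem_range, hx]
    have h := Finset.le_sup (f := fun p : ℕ × Fin n => (φ p).1) hmem
    rw [hJ]
    exact h
  set L : ℕ := x₀ + M₀ + J + 1 with hL
  -- surjectivity beyond L
  have hsurj : ∀ z : ℕ, ∀ i : Fin n, L ≤ z → (z, i) ∈ Set.range φ := by
    intro z i hz
    have h1 : (0:ℤ) ≤ (z:ℤ) - m i := by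
      have := hm_le i
      have h2 : (m i : ℤ) ≤ M₀ := le_trans (Int.le_natAbs) (by exact_mod_cast this)
      omega
    set t : ℕ := ((z:ℤ) - m i).toNat with ht
    have ht' : (t:ℤ) = (z:ℤ) - m i := Int.toNat_of_nonneg h1
    have hx₀t : x₀ ≤ t := by
      have h2 : (m i : ℤ) ≤ M₀ := le_trans (Int.le_natAbs) (by exact_mod_cast hm_le i)
      omega
    obtain ⟨e1, e2⟩ := hev t i hx₀t
    refine ⟨(t, i), ?_⟩
    have : ((φ (t, i)).1 : ℤ) = (z:ℤ) := by rw [e1]; omega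
    have hfst : (φ (t, i)).1 = z := by exact_mod_cast this
    exact Prod.ext hfst e2
  clear_value M₀ J L
  set B : Finset (ℕ × Fin n) := Finset.range L ×ˢ Finset.univ with hB
  set Bim : Finset (ℕ × Fin n) := B.filter (fun p => p ∈ Set.range φ) with hBim
  set A : Finset (ℕ × Fin n) :=
    (Finset.range (L + M₀) ×ˢ (Finset.univ : Finset (Fin n))).filter
      (fun p => (p.1 : ℤ) < (L:ℤ) - m p.2) with hA
  -- φ is a bijection from A to Bim
  have hcard : Bim.card = A.card := by
    refine (Finset.card_bij (fun p _ => φ p) ?_ ?_ ?_).symm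
    · -- maps into Bim
      rintro ⟨x, i⟩ hp
      simp only [hA, Finset.mem_filter, Finset.mem_product, Finset.mem_range] at hp
      obtain ⟨⟨hx1, -⟩, hx2⟩ := hp
      simp only [hBim, Finset.mem_filter, hB, Finset.mem_product, Finset.mem_range]
      refine ⟨⟨?_, Finset.mem_univ _⟩, Set.mem_range_self _⟩
      rcases lt_or_ge x x₀ with hx | hx
      · exact lt_of_le_of_lt (hJ_le x i hx) (by omega)
      · have := (hev x i hx).1
        have : ((φ (x, i)).1 : ℤ) < L := by omega
        exact_mod_cast this
    · -- injective
      intro p _ q _ h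
      exact hinj h
    · -- surjective onto Bim
      rintro ⟨z, i'⟩ hb
      simp only [hBim, Finset.mem_filter, hB, Finset.mem_product, Finset.mem_range] at hb
      obtain ⟨⟨hz, -⟩, ⟨⟨x, i⟩, hp⟩⟩ := hb
      refine ⟨(x, i), ?_, hp⟩
      simp only [hA, Finset.mem_filter, Finset.mem_product, Finset.mem_range]
      have h2 : (m i : ℤ) ≤ M₀ ∧ -(M₀:ℤ) ≤ m i := by
        have := hm_le i
        constructor
        · exact le_trans (Int.le_natAbs) (by exact_mod_cast this)
        · have : ((m i).natAbs : ℤ) ≤ (M₀ : ℤ) := by exact_mod_cast this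
          omega
      rcases lt_or_ge x x₀ with hx | hx
      · exact ⟨⟨by omega, Finset.mem_univ _⟩, by omega⟩
      · obtain ⟨e1, -⟩ := hev x i hx
        rw [hp] at e1
        have hz' : ((z:ℤ)) < L := by exact_mod_cast hz
        exact ⟨⟨by omega, Finset.mem_univ _⟩, by omega⟩
  -- card of A
  have hAcard : (A.card : ℤ) = (n : ℤ) * L - ∑ i, m i := by
    have step1 : A.card = ∑ i : Fin n, ((L:ℤ) - m i).toNat := by
      rw [hA, Finset.card_filter, Finset.sum_product_right]
      refine Finset.sum_congr rfl fun i _ => ?_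
      rw [← Finset.card_filter]
      have h2 : -(M₀:ℤ) ≤ m i := by
        have : ((m i).natAbs : ℤ) ≤ (M₀ : ℤ) := by exact_mod_cast hm_le i
        omega
      have heq : (Finset.range (L + M₀)).filter (fun x : ℕ => ((x:ℕ) : ℤ) < (L:ℤ) - m i)
          = Finset.range (((L:ℤ) - m i).toNat) := by
        ext a
        simp only [Finset.mem_filter, Finset.mem_range]
        omega
      show (Finset.filter (fun x : ℕ => ((x:ℕ) : ℤ) < (L:ℤ) - m i) (Finset.range (L + M₀))).card = _
      rw [heq, Finset.card_range]
    rw [step1]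
    push_cast
    rw [Finset.sum_congr rfl (fun i _ => Int.toNat_of_nonneg (by
      have h2 : (m i : ℤ) ≤ M₀ := le_trans (Int.le_natAbs) (by exact_mod_cast hm_le i)
      omega))]
    rw [Finset.sum_sub_distrib, Finset.sum_const, Finset.card_univ, Fintype.card_fin]
    push_cast
    ring
  -- the complement equals B \ Bim
  have hcompl : (Set.range φ)ᶜ = ↑(B \ Bim) := by
    ext ⟨z, i⟩
    simp only [Set.mem_compl_iff, Finset.coe_sdiff, Set.mem_diff, Finset.mem_coe,
      hBim, Finset.mem_filter, hB, Finset.mem_product, Finset.mem_range]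
    constructor
    · intro h
      have hz : z < L := by
        by_contra hz
        exact h (hsurj z i (by omega))
      exact ⟨⟨hz, Finset.mem_univ _⟩, fun hh => h hh.2⟩
    · rintro ⟨⟨hz, -⟩, h⟩ hr
      exact h ⟨⟨hz, Finset.mem_univ _⟩, hr⟩
  constructor
  · rw [hcompl]; exact (B \ Bim).finite_toSet
  · rw [hcompl, Set.ncard_coe_finset, Finset.card_sdiff_of_subset (Finset.filter_subset _ _)]
    have hsub : Bim.card ≤ B.card := Finset.card_le_card (Finset.filter_subset _ _)
    have hBcard : B.card = L * n := by
      rw [hB, Finset.card_product, Finset.card_range, Finset.card_univ, Fintype.card_fin]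
    rw [Nat.cast_sub hsub, hBcard, hcard]
    push_cast
    linarith [hAcard]

end Aux

section Phi
variable {n : ℕ}

/-- From the data of `MCond`, extract the map `Φ` on vertical half-lines. -/
lemma exists_phi (α : QSet n → QSet n) (hinj : Function.Injective α)
    (x₀ y₀ : ℕ) (m : Fin n → ℤ)
    (h1 : ∀ (x y : ℕ) (i : Fin n), x₀ ≤ x → y₀ ≤ y →
      (α ((x, y), i)).2 = i ∧
      ((α ((x, y), i)).1.1 : ℤ) = (x : ℤ) + m i ∧
      ((α ((x, y), i)).1.2 : ℤ) = (y : ℤ) + m i)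
    (h2 : ∀ (x : ℕ) (i : Fin n), ∃ (q : ℤ) (x' : ℕ) (i' : Fin n),
      ∀ y : ℕ, y₀ ≤ y →
        (α ((x, y), i)).1.1 = x' ∧ (α ((x, y), i)).2 = i' ∧
        ((α ((x, y), i)).1.2 : ℤ) = (y : ℤ) + q)
    (h3 : ∀ (y : ℕ) (i : Fin n), ∃ (r : ℤ) (y' : ℕ) (i' : Fin n),
      ∀ x : ℕ, x₀ ≤ x →
        (α ((x, y), i)).1.2 = y' ∧ (α ((x, y), i)).2 = i' ∧
        ((α ((x, y), i)).1.1 : ℤ) = (x : ℤ) + r) :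
    ∃ (Φ : ℕ × Fin n → ℕ × Fin n) (N₀ : ℕ),
      Function.Injective Φ ∧
      (∀ x i, x₀ ≤ x → ((Φ (x, i)).1 : ℤ) = (x : ℤ) + m i ∧ (Φ (x, i)).2 = i) ∧
      MissV α = (Set.range Φ)ᶜ ∧
      (∀ a b : ℕ, ∀ j : Fin n, N₀ ≤ (α ((a, b), j)).1.2 →
        Φ (a, j) = ((α ((a, b), j)).1.1, (α ((a, b), j)).2)) := by
  classical
  choose q X I hcol using h2
  choose r Yr Jr hrow using h3
  set Φ : ℕ × Fin n → ℕ × Fin n := fun p => (X p.1 p.2, I p.1 p.2) with hΦ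
  -- key injectivity step
  have key : ∀ (a : ℕ) (j : Fin n) (a' : ℕ) (j' : Fin n), q a j ≤ q a' j' →
      X a j = X a' j' → I a j = I a' j' → a = a' ∧ j = j' := by
    intro a j a' j' hq hX hI
    set d : ℕ := (q a' j' - q a j).toNat with hd
    have hd' : (d : ℤ) = q a' j' - q a j := Int.toNat_of_nonneg (by omega)
    obtain ⟨f1, f2, f3⟩ := hcol a j (y₀ + d) (by omega)
    obtain ⟨g1, g2, g3⟩ := hcol a' j' y₀ (le_refl _)
    have hsnd : (α ((a, y₀ + d), j)).1.2 = (α ((a', y₀), j')).1.2 := by omega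
    have heq : α ((a, y₀ + d), j) = α ((a', y₀), j') := by
      refine Prod.ext (Prod.ext ?_ hsnd) ?_
      · rw [f1, g1, hX]
      · rw [f2, g2, hI]
    have := hinj heq
    simp only [Prod.mk.injEq] at this
    obtain ⟨⟨h1', h2'⟩, h3'⟩ := this
    exact ⟨h1', h3'⟩
  have hΦinj : Function.Injective Φ := by
    rintro ⟨a, j⟩ ⟨a', j'⟩ h
    simp only [hΦ, Prod.mk.injEq] at h
    rcases le_total (q a j) (q a' j') with hq | hq
    · obtain ⟨e1, e2⟩ := key a j a' j' hq h.1 h.2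
      rw [e1, e2]
    · obtain ⟨e1, e2⟩ := key a' j' a j hq h.1.symm h.2.symm
      rw [e1, e2]
  -- eventual translation
  have hev : ∀ x i, x₀ ≤ x → ((Φ (x, i)).1 : ℤ) = (x : ℤ) + m i ∧ (Φ (x, i)).2 = i := by
    intro x i hx
    obtain ⟨e1, e2, e3⟩ := h1 x y₀ i hx (le_refl _)
    obtain ⟨f1, f2, f3⟩ := hcol x i y₀ (le_refl _)
    constructor
    · show ((X x i : ℕ) : ℤ) = (x : ℤ) + m i
      rw [← f1]; exact e2
    · show I x i = i
      rw [← f2]; exact e1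
  -- the constant N₀
  set N₀ : ℕ := 1 + ((Finset.range y₀ ×ˢ (Finset.univ : Finset (Fin n))).sup fun p => Yr p.1 p.2)
      + ((Finset.range x₀ ×ˢ Finset.range y₀ ×ˢ (Finset.univ : Finset (Fin n))).sup
          fun p => (α ((p.1, p.2.1), p.2.2)).1.2) with hN₀
  have struct : ∀ a b : ℕ, ∀ j : Fin n, N₀ ≤ (α ((a, b), j)).1.2 → y₀ ≤ b := by
    intro a b j h
    by_contra hb
    push_neg at hb
    rcases le_or_gt x₀ a with ha | ha
    · obtain ⟨e1, -, -⟩ := hrow b j a ha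
      have hmem : (b, j) ∈ Finset.range y₀ ×ˢ (Finset.univ : Finset (Fin n)) := by
        simp [Finset.mem_product, Finset.mem_range, hb]
      have hle := Finset.le_sup (f := fun p : ℕ × Fin n => Yr p.1 p.2) hmem
      simp only at hle
      rw [e1] at h
      omega
    · have hmem : (a, b, j) ∈ Finset.range x₀ ×ˢ Finset.range y₀ ×ˢ
          (Finset.univ : Finset (Fin n)) := by
        simp [Finset.mem_product, Finset.mem_range, hb, ha]
      have hle := Finset.le_sup
        (f := fun p : ℕ × ℕ × Fin n => (α ((p.1, p.2.1), p.2.2)).1.2) hmem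
      simp only at hle
      omega
  have hstruct2 : ∀ a b : ℕ, ∀ j : Fin n, N₀ ≤ (α ((a, b), j)).1.2 →
      Φ (a, j) = ((α ((a, b), j)).1.1, (α ((a, b), j)).2) := by
    intro a b j h
    have hb := struct a b j h
    obtain ⟨f1, f2, -⟩ := hcol a j b hb
    simp only [hΦ]
    rw [f1, f2]
  refine ⟨Φ, N₀, hΦinj, hev, ?_, hstruct2⟩
  -- MissV α = (range Φ)ᶜ
  ext ⟨x', i'⟩
  simp only [MissV, Set.mem_setOf_eq, Set.mem_compl_iff]
  constructor
  · rintro ⟨N, hN⟩ ⟨⟨a, j⟩, hfeq⟩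
    simp only [hΦ, Prod.mk.injEq] at hfeq
    set y : ℕ := y₀ + N + (-(q a j)).toNat with hy
    obtain ⟨f1, f2, f3⟩ := hcol a j y (by omega)
    have htn := Int.self_le_toNat (-(q a j))
    have hs : N ≤ (α ((a, y), j)).1.2 := by omega
    refine hN _ hs ⟨((a, y), j), ?_⟩
    refine Prod.ext (Prod.ext ?_ rfl) ?_
    · rw [f1, hfeq.1]
    · rw [f2, hfeq.2]
  · intro h
    refine ⟨N₀, fun Y hY ⟨⟨⟨a, b⟩, j⟩, hab⟩ => ?_⟩
    apply h
    have h2 : N₀ ≤ (α ((a, b), j)).1.2 := by rw [hab]; exact hY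
    have := hstruct2 a b j h2
    refine ⟨(a, j), ?_⟩
    rw [this, hab]
end Phi

section Cards
variable {n : ℕ}

lemma missV_finite_card (α : QSet n → QSet n) (hinj : Function.Injective α)
    (x₀ y₀ : ℕ) (m : Fin n → ℤ)
    (h1 : ∀ (x y : ℕ) (i : Fin n), x₀ ≤ x → y₀ ≤ y →
      (α ((x, y), i)).2 = i ∧
      ((α ((x, y), i)).1.1 : ℤ) = (x : ℤ) + m i ∧
      ((α ((x, y), i)).1.2 : ℤ) = (y : ℤ) + m i)
    (h2 : ∀ (x : ℕ) (i : Fin n), ∃ (q : ℤ) (x' : ℕ) (i' : Fin n),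
      ∀ y : ℕ, y₀ ≤ y →
        (α ((x, y), i)).1.1 = x' ∧ (α ((x, y), i)).2 = i' ∧
        ((α ((x, y), i)).1.2 : ℤ) = (y : ℤ) + q)
    (h3 : ∀ (y : ℕ) (i : Fin n), ∃ (r : ℤ) (y' : ℕ) (i' : Fin n),
      ∀ x : ℕ, x₀ ≤ x →
        (α ((x, y), i)).1.2 = y' ∧ (α ((x, y), i)).2 = i' ∧
        ((α ((x, y), i)).1.1 : ℤ) = (x : ℤ) + r) :
    (MissV α).Finite ∧ (((MissV α).ncard : ℤ) = ∑ i, m i) := by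
  obtain ⟨Φ, N₀, hΦinj, hev, hMV, -⟩ := exists_phi α hinj x₀ y₀ m h1 h2 h3
  have h := compl_card Φ hΦinj x₀ m hev
  rw [hMV]
  exact h

/-- The transposition of the two coordinates. -/
def trQ {n : ℕ} : QSet n → QSet n := fun p => ((p.1.2, p.1.1), p.2)

lemma trQ_invol {n : ℕ} : ∀ p : QSet n, trQ (trQ p) = p := fun _ => rfl

lemma missH_finite_card (α : QSet n → QSet n) (hinj : Function.Injective α)
    (x₀ y₀ : ℕ) (m : Fin n → ℤ)
    (h1 : ∀ (x y : ℕ) (i : Fin n), x₀ ≤ x → y₀ ≤ y →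
      (α ((x, y), i)).2 = i ∧
      ((α ((x, y), i)).1.1 : ℤ) = (x : ℤ) + m i ∧
      ((α ((x, y), i)).1.2 : ℤ) = (y : ℤ) + m i)
    (h2 : ∀ (x : ℕ) (i : Fin n), ∃ (q : ℤ) (x' : ℕ) (i' : Fin n),
      ∀ y : ℕ, y₀ ≤ y →
        (α ((x, y), i)).1.1 = x' ∧ (α ((x, y), i)).2 = i' ∧
        ((α ((x, y), i)).1.2 : ℤ) = (y : ℤ) + q)
    (h3 : ∀ (y : ℕ) (i : Fin n), ∃ (r : ℤ) (y' : ℕ) (i' : Fin n),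
      ∀ x : ℕ, x₀ ≤ x →
        (α ((x, y), i)).1.2 = y' ∧ (α ((x, y), i)).2 = i' ∧
        ((α ((x, y), i)).1.1 : ℤ) = (x : ℤ) + r) :
    (MissH α).Finite ∧ (((MissH α).ncard : ℤ) = ∑ i, m i) := by
  set α' : QSet n → QSet n := fun p => trQ (α (trQ p)) with hα'
  have hrange : ∀ p : QSet n, p ∈ Set.range α' ↔ trQ p ∈ Set.range α := by
    intro p
    constructor
    · rintro ⟨s, hs⟩
      exact ⟨trQ s, by rw [← hs]; exact (trQ_invol _)⟩
    · rintro ⟨u, hu⟩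
      exact ⟨trQ u, by simp only [hα', trQ_invol, hu]⟩
  have hMH : MissH α = MissV α' := by
    ext p
    simp only [MissH, MissV, Set.mem_setOf_eq]
    constructor
    · rintro ⟨N, hN⟩
      exact ⟨N, fun y hy hmem => hN y hy ((hrange _).mp hmem)⟩
    · rintro ⟨N, hN⟩
      refine ⟨N, fun x hx hmem => hN x hx ?_⟩
      rw [hrange]
      exact hmem
  have hinj' : Function.Injective α' := by
    intro a b h
    simp only [hα'] at h
    have h2' : α (trQ a) = α (trQ b) := by
      have := congrArg trQ h
      simpa only [trQ_invol] using this
    have := hinj h2'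
    have := congrArg trQ this
    simpa only [trQ_invol] using this
  rw [hMH]
  apply missV_finite_card α' hinj' y₀ x₀ m
  · intro x y i hx hy
    obtain ⟨e1, e2, e3⟩ := h1 y x i hy hx
    exact ⟨e1, e3, e2⟩
  · intro x i
    obtain ⟨r, y', i', hr⟩ := h3 x i
    exact ⟨r, y', i', fun y hy => ⟨(hr y hy).1, (hr y hy).2.1, (hr y hy).2.2⟩⟩
  · intro y i
    obtain ⟨q, x', i', hq⟩ := h2 y i
    exact ⟨q, x', i', fun x hx => ⟨(hq x hx).1, (hq x hx).2.1, (hq x hx).2.2⟩⟩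

lemma mcond_missV_finite {α : QSet n → QSet n} (h : MCond α) : (MissV α).Finite := by
  obtain ⟨hinj, x₀, y₀, m, h1, h2, h3⟩ := h
  exact (missV_finite_card α hinj x₀ y₀ m h1 h2 h3).1

lemma mcond_cards_eq {α : QSet n → QSet n} (h : MCond α) :
    (MissH α).Finite ∧ (MissV α).ncard = (MissH α).ncard := by
  obtain ⟨hinj, x₀, y₀, m, h1, h2, h3⟩ := h
  obtain ⟨hf1, hc1⟩ := missV_finite_card α hinj x₀ y₀ m h1 h2 h3
  obtain ⟨hf2, hc2⟩ := missH_finite_card α hinj x₀ y₀ m h1 h2 h3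
  exact ⟨hf2, by omega⟩

end Cards

section Order
variable {n : ℕ}

lemma translMap_zero_eq (s : QSet n) : translMap (fun _ => 0) s = s := by
  simp [translMap]

lemma missV_mono {x y : MMon n} (h : Mle x y) : MissV x.1 ⊆ MissV y.1 := by
  obtain ⟨w, hw⟩ := h
  rintro p ⟨N, hN⟩
  refine ⟨N, fun Y hY hmem => ?_⟩
  obtain ⟨s, hs⟩ := hmem
  exact hN Y hY ⟨translMap w s, by rw [hw s]; exact hs⟩

lemma gr_strict {x y : MMon n} (h : Mlt x y) : gr x.1 < gr y.1 := by
  obtain ⟨⟨w, hw⟩, hne⟩ := h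
  have hw0 : ∃ i₀, w i₀ ≠ 0 := by
    by_contra hc
    push_neg at hc
    refine hne (Subtype.ext (funext fun s => ?_))
    rw [← hw s]
    congr 1
    have : w = fun _ => 0 := funext hc
    rw [this, translMap_zero_eq]
  obtain ⟨i₀, hi₀⟩ := hw0
  obtain ⟨hinj, x₀, y₀, m, h1, h2, h3⟩ := x.2
  obtain ⟨Φ, N₀, hΦinj, hev, hMV, hstruct⟩ := exists_phi x.1 hinj x₀ y₀ m h1 h2 h3
  set pv : ℕ × Fin n := Φ (0, i₀) with hpv
  have hnotin : pv ∉ MissV x.1 := by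
    rw [hMV]
    simp only [Set.mem_compl_iff, not_not]
    exact ⟨(0, i₀), rfl⟩
  have hin : pv ∈ MissV y.1 := by
    refine ⟨N₀, fun Y hY hmem => ?_⟩
    obtain ⟨⟨⟨a, b⟩, j⟩, hab⟩ := hmem
    rw [← hw ((a, b), j)] at hab
    have htm : translMap w ((a, b), j) = ((a + w j, b + w j), j) := rfl
    rw [htm] at hab
    have hY2 : N₀ ≤ (x.1 ((a + w j, b + w j), j)).1.2 := by rw [hab]; exact hY
    have hΦeq := hstruct (a + w j) (b + w j) j hY2
    rw [hab] at hΦeq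
    have : Φ (a + w j, j) = Φ (0, i₀) := by rw [hΦeq, hpv]
    have heq := hΦinj this
    simp only [Prod.mk.injEq] at heq
    exact hi₀ (heq.2 ▸ (by omega : a + w j = 0 → w j = 0) heq.1)
  have hsub : MissV x.1 ⊆ MissV y.1 := missV_mono ⟨w, hw⟩
  have hss : MissV x.1 ⊂ MissV y.1 := ⟨hsub, fun hsup => hnotin (hsup hin)⟩
  rw [gr_eq_ncard, gr_eq_ncard]
  exact Set.ncard_lt_ncard hss (mcond_missV_finite y.2)

lemma mle_trans {x y z : MMon n} (h1 : Mle x y) (h2 : Mle y z) : Mle x z := by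
  obtain ⟨w1, hw1⟩ := h1
  obtain ⟨w2, hw2⟩ := h2
  refine ⟨fun i => w2 i + w1 i, fun s => ?_⟩
  rw [← hw2 s, ← hw1 (translMap w2 s)]
  have : translMap w1 (translMap w2 s) = translMap (fun i => w2 i + w1 i) s := by
    simp only [translMap, Prod.mk.injEq]
    exact ⟨⟨by ring, by ring⟩, trivial⟩
  rw [this]

lemma mlt_trans' {x y z : MMon n} (h1 : Mlt x y) (h2 : Mle y z) : Mlt x z := by
  refine ⟨mle_trans h1.1 h2, fun heq => ?_⟩
  have hlt := gr_strict h1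
  have hle : gr y.1 ≤ gr z.1 := by
    rcases eq_or_ne y z with rfl | hne
    · exact le_refl _
    · exact le_of_lt (gr_strict ⟨h2, hne⟩)
  rw [heq] at hlt
  omega

end Order

section Step
variable {n : ℕ}

lemma step_down (α : MMon n) (h : 0 < gr α.1) :
    ∃ β : MMon n, Mlt β α ∧ gr β.1 + 1 = gr α.1 := by
  classical
  have hVfin := mcond_missV_finite α.2
  obtain ⟨hHfin, hcards⟩ := mcond_cards_eq α.2
  rw [gr_eq_ncard] at h
  obtain ⟨⟨xv, iv⟩, Nv, hNv⟩ : (MissV α.1).Nonempty :=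
    Set.nonempty_of_ncard_ne_zero (by omega)
  obtain ⟨⟨yh, jh⟩, Nh0, hNh0⟩ : (MissH α.1).Nonempty :=
    Set.nonempty_of_ncard_ne_zero (by omega)
  have hNv' : ∀ y, Nv ≤ y → ((xv, y), iv) ∉ Set.range α.1 := fun y hy => hNv y hy
  set Nh : ℕ := max Nh0 (xv + 1) with hNh_def
  have hNh : ∀ x, Nh ≤ x → ((x, yh), jh) ∉ Set.range α.1 :=
    fun x hx => hNh0 x (le_trans (le_max_left _ _) hx)
  have hxvNh : xv < Nh := lt_of_lt_of_le (Nat.lt_succ_self xv) (le_max_right _ _)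
  set b : QSet n → QSet n := fun p =>
    if p.2 = iv then
      if p.1.1 = 0 then ((xv, p.1.2 + Nv), iv)
      else if p.1.2 = 0 then ((p.1.1 + Nh, yh), jh)
      else α.1 ((p.1.1 - 1, p.1.2 - 1), p.2)
    else α.1 p with hbdef
  have bV : ∀ y, b ((0, y), iv) = ((xv, y + Nv), iv) := fun y => by simp [hbdef]
  have bH : ∀ x, x ≠ 0 → b ((x, 0), iv) = ((x + Nh, yh), jh) := fun x hx => by
    simp [hbdef, hx]
  have bS : ∀ x y, x ≠ 0 → y ≠ 0 → b ((x, y), iv) = α.1 ((x - 1, y - 1), iv) := by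
    intro x y hx hy; simp [hbdef, hx, hy]
  have bO : ∀ p : QSet n, p.2 ≠ iv → b p = α.1 p := fun p hp => by
    simp [hbdef, hp]
  have hVnot : ∀ y, ((xv, y + Nv), iv) ∉ Set.range α.1 := fun y => hNv' (y + Nv) (by omega)
  have hHnot : ∀ x, ((x + Nh, yh), jh) ∉ Set.range α.1 := fun x => hNh (x + Nh) (by omega)
  obtain ⟨hinj, x₀, y₀, m, h1, h2, h3⟩ := α.2
  -- injectivity of b
  have hbinj : Function.Injective b := by
    rintro ⟨⟨px, py⟩, pi⟩ ⟨⟨qx, qy⟩, qi⟩ hpq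
    by_cases hpi : pi = iv <;> by_cases hqi : qi = iv
    · rw [hpi] at hpq ⊢; rw [hqi] at hpq ⊢
      by_cases hpx : px = 0 <;> by_cases hqx : qx = 0
      · rw [hpx] at hpq ⊢; rw [hqx] at hpq ⊢
        rw [bV, bV] at hpq
        simp only [Prod.mk.injEq] at hpq
        have : py = qy := by omega
        rw [this]
      · rw [hpx] at hpq ⊢
        rw [bV] at hpq
        by_cases hqy : qy = 0
        · rw [hqy] at hpq
          rw [bH qx hqx] at hpq
          simp only [Prod.mk.injEq] at hpq
          omega
        · rw [bS qx qy hqx hqy] at hpq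
          exact absurd ⟨_, hpq.symm⟩ (hVnot py)
      · rw [hqx] at hpq ⊢
        rw [bV] at hpq
        by_cases hpy : py = 0
        · rw [hpy] at hpq
          rw [bH px hpx] at hpq
          simp only [Prod.mk.injEq] at hpq
          omega
        · rw [bS px py hpx hpy] at hpq
          exact absurd ⟨_, hpq⟩ (hVnot qy)
      · by_cases hpy : py = 0 <;> by_cases hqy : qy = 0
        · rw [hpy] at hpq ⊢; rw [hqy] at hpq ⊢
          rw [bH px hpx, bH qx hqx] at hpq
          simp only [Prod.mk.injEq] at hpq
          have : px = qx := by omega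
          rw [this]
        · rw [hpy] at hpq
          rw [bH px hpx, bS qx qy hqx hqy] at hpq
          exact absurd ⟨_, hpq.symm⟩ (hHnot px)
        · rw [hqy] at hpq
          rw [bS px py hpx hpy, bH qx hqx] at hpq
          exact absurd ⟨_, hpq⟩ (hHnot qx)
        · rw [bS px py hpx hpy, bS qx qy hqx hqy] at hpq
          have := hinj hpq
          simp only [Prod.mk.injEq] at this
          have e1 : px = qx := by omega
          have e2 : py = qy := by omega
          rw [e1, e2]
    · rw [hpi] at hpq ⊢
      rw [bO ((qx, qy), qi) hqi] at hpq
      by_cases hpx : px = 0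
      · rw [hpx] at hpq
        rw [bV] at hpq
        exact absurd ⟨_, hpq.symm⟩ (hVnot py)
      · by_cases hpy : py = 0
        · rw [hpy] at hpq
          rw [bH px hpx] at hpq
          exact absurd ⟨_, hpq.symm⟩ (hHnot px)
        · rw [bS px py hpx hpy] at hpq
          have := hinj hpq
          simp only [Prod.mk.injEq] at this
          exact absurd this.2.symm hqi
    · rw [hqi] at hpq ⊢
      rw [bO ((px, py), pi) hpi] at hpq
      by_cases hqx : qx = 0
      · rw [hqx] at hpq
        rw [bV] at hpq
        exact absurd ⟨_, hpq⟩ (hVnot qy)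
      · by_cases hqy : qy = 0
        · rw [hqy] at hpq
          rw [bH qx hqx] at hpq
          exact absurd ⟨_, hpq⟩ (hHnot qx)
        · rw [bS qx qy hqx hqy] at hpq
          have := hinj hpq
          simp only [Prod.mk.injEq] at this
          exact absurd this.2 hpi
    · rw [bO ((px, py), pi) hpi, bO ((qx, qy), qi) hqi] at hpq
      exact hinj hpq
  -- MCond b
  have hbM : MCond b := by
    refine ⟨hbinj, x₀ + 1, y₀ + 1, fun j => if j = iv then m iv - 1 else m j, ?_, ?_, ?_⟩
    · -- B1
      intro x y i hx hy
      by_cases hi : i = iv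
      · rw [hi]
        rw [bS x y (by omega) (by omega)]
        obtain ⟨e1, e2, e3⟩ := h1 (x - 1) (y - 1) iv (by omega) (by omega)
        refine ⟨e1, ?_, ?_⟩
        · simp only [eq_self_iff_true, if_true]
          rw [e2]
          omega
        · simp only [eq_self_iff_true, if_true]
          rw [e3]
          omega
      · rw [bO ((x, y), i) hi]
        obtain ⟨e1, e2, e3⟩ := h1 x y i (by omega) (by omega)
        refine ⟨e1, ?_, ?_⟩
        · simp only [if_neg hi]
          rw [e2]
        · simp only [if_neg hi]
          rw [e3]
    · -- B2(a)
      intro x i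
      by_cases hi : i = iv
      · by_cases hx : x = 0
        · refine ⟨(Nv : ℤ), xv, iv, fun y hy => ?_⟩
          rw [hi, hx, bV]
          exact ⟨rfl, rfl, by push_cast; ring⟩
        · obtain ⟨q, x', i', hc⟩ := h2 (x - 1) iv
          refine ⟨q - 1, x', i', fun y hy => ?_⟩
          rw [hi, bS x y hx (by omega)]
          obtain ⟨e1, e2, e3⟩ := hc (y - 1) (by omega)
          refine ⟨e1, e2, ?_⟩
          rw [e3]
          omega
      · obtain ⟨q, x', i', hc⟩ := h2 x i
        refine ⟨q, x', i', fun y hy => ?_⟩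
        rw [bO ((x, y), i) hi]
        exact hc y (by omega)
    · -- B2(b)
      intro y i
      by_cases hi : i = iv
      · by_cases hy : y = 0
        · refine ⟨(Nh : ℤ), yh, jh, fun x hx => ?_⟩
          rw [hi, hy, bH x (by omega)]
          exact ⟨rfl, rfl, by push_cast; ring⟩
        · obtain ⟨r, y', i', hr⟩ := h3 (y - 1) iv
          refine ⟨r - 1, y', i', fun x hx => ?_⟩
          rw [hi, bS x y (by omega) hy]
          obtain ⟨e1, e2, e3⟩ := hr (x - 1) (by omega)
          refine ⟨e1, e2, ?_⟩
          rw [e3]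
          omega
      · obtain ⟨r, y', i', hr⟩ := h3 y i
        refine ⟨r, y', i', fun x hx => ?_⟩
        rw [bO ((x, y), i) hi]
        exact hr x (by omega)
  -- Mlt ⟨b, hbM⟩ α
  have hmle : Mle ⟨b, hbM⟩ α := by
    refine ⟨fun j => if j = iv then 1 else 0, fun s => ?_⟩
    obtain ⟨⟨sx, sy⟩, si⟩ := s
    show b (translMap _ ((sx, sy), si)) = α.1 ((sx, sy), si)
    by_cases hsi : si = iv
    · rw [hsi]
      have ht : translMap (fun j => if j = iv then 1 else 0) ((sx, sy), iv)
          = ((sx + 1, sy + 1), iv) := by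
        simp [translMap]
      rw [ht]
      rw [bS (sx + 1) (sy + 1) (by omega) (by omega)]
      norm_num
    · have ht : translMap (fun j => if j = iv then 1 else 0) ((sx, sy), si)
          = ((sx, sy), si) := by
        simp [translMap, hsi]
      rw [ht]
      exact bO _ hsi
  have hmne : (⟨b, hbM⟩ : MMon n) ≠ α := by
    intro heq
    have hfun : b = α.1 := congrArg Subtype.val heq
    have hval : b ((0, 0), iv) = α.1 ((0, 0), iv) := congrFun hfun _
    rw [bV 0] at hval
    exact hVnot 0 ⟨((0, 0), iv), hval.symm⟩
  have hmlt : Mlt ⟨b, hbM⟩ α := ⟨hmle, hmne⟩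
  refine ⟨⟨b, hbM⟩, hmlt, ?_⟩
  -- degree computation
  have hlt : gr b < gr α.1 := gr_strict hmlt
  have hβfin : (MissV b).Finite := mcond_missV_finite hbM
  have hsub : MissV α.1 ⊆ insert (xv, iv) (MissV b) := by
    rintro ⟨x', i'⟩ ⟨N, hN⟩
    by_cases hp : ((x' : ℕ), i') = (xv, iv)
    · rw [hp]; exact Set.mem_insert _ _
    · refine Set.mem_insert_iff.mpr (Or.inr ⟨max N (yh + 1), fun Y hY hmem => ?_⟩)
      obtain ⟨⟨⟨sx, sy⟩, si⟩, hs⟩ := hmem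
      by_cases hsi : si = iv
      · rw [hsi] at hs
        by_cases hsx : sx = 0
        · rw [hsx, bV] at hs
          simp only [Prod.mk.injEq] at hs
          exact hp (by rw [← hs.1.1, ← hs.2])
        · by_cases hsy : sy = 0
          · rw [hsy, bH sx hsx] at hs
            simp only [Prod.mk.injEq] at hs
            omega
          · rw [bS sx sy hsx hsy] at hs
            exact hN Y (by omega) ⟨_, hs⟩
      · rw [bO _ hsi] at hs
        exact hN Y (by omega) ⟨_, hs⟩
  have hle2 : (MissV α.1).ncard ≤ (MissV b).ncard + 1 := by
    calc (MissV α.1).ncard ≤ (insert (xv, iv) (MissV b)).ncard :=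
          Set.ncard_le_ncard hsub (hβfin.insert _)
      _ ≤ (MissV b).ncard + 1 := Set.ncard_insert_le _ _
  have e1 : gr ((⟨b, hbM⟩ : MMon n)).1 = (MissV b).ncard := rfl
  have e2 : gr α.1 = (MissV α.1).ncard := rfl
  have e3 : gr b = (MissV b).ncard := rfl
  omega

end Step

section Main
variable {n : ℕ}

lemma exists_chain (k : ℕ) : ∀ α : MMon n, gr α.1 = k →
    ∃ c : Fin (k + 1) → MMon n, c (Fin.last k) = α ∧
      ∀ i j : Fin (k + 1), i < j → Mlt (c i) (c j) := by
  induction k with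
  | zero =>
    intro α _
    refine ⟨fun _ => α, rfl, fun i j hij => ?_⟩
    exact absurd (Fin.lt_def.mp hij) (by have := i.isLt; have := j.isLt; omega)
  | succ k ih =>
    intro α hα
    obtain ⟨β, hmlt, hgr⟩ := step_down α (by omega)
    obtain ⟨c, hclast, hchain⟩ := ih β (by omega)
    refine ⟨Fin.snoc c α, by simp, ?_⟩
    intro i j hij
    rcases eq_or_ne j (Fin.last (k + 1)) with rfl | hj
    · have hi : i ≠ Fin.last (k + 1) := ne_of_lt hij
      have hsn : (Fin.snoc c α : Fin (k + 2) → MMon n) i = c (i.castPred hi) := by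
        conv_lhs => rw [← Fin.castSucc_castPred i hi]
        rw [Fin.snoc_castSucc]
      rw [hsn, Fin.snoc_last]
      rcases eq_or_ne (i.castPred hi) (Fin.last k) with he | hne
      · rw [he, hclast]; exact hmlt
      · have hlt : Mlt (c (i.castPred hi)) (c (Fin.last k)) :=
          hchain _ _ (lt_of_le_of_ne (Fin.le_last _) hne)
        rw [hclast] at hlt
        exact mlt_trans' hlt hmlt.1
    · have hjlt : j < Fin.last (k + 1) := lt_of_le_of_ne (Fin.le_last j) hj
      have hi : i ≠ Fin.last (k + 1) := ne_of_lt (lt_trans hij hjlt)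
      have hsni : (Fin.snoc c α : Fin (k + 2) → MMon n) i = c (i.castPred hi) := by
        conv_lhs => rw [← Fin.castSucc_castPred i hi]
        rw [Fin.snoc_castSucc]
      have hsnj : (Fin.snoc c α : Fin (k + 2) → MMon n) j = c (j.castPred hj) := by
        conv_lhs => rw [← Fin.castSucc_castPred j hj]
        rw [Fin.snoc_castSucc]
      rw [hsni, hsnj]
      refine hchain _ _ ?_
      rw [Fin.lt_def] at hij ⊢
      simpa using hij

theorem stmt_8' (α : MMon n) :
    IsGreatest {k : ℕ | ∃ c : Fin (k + 1) → MMon n,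
      c (Fin.last k) = α ∧ ∀ i j : Fin (k + 1), i < j → Mlt (c i) (c j)} (gr α.1) := by
  constructor
  · exact exists_chain (gr α.1) α rfl
  · rintro k ⟨c, hlast, hchain⟩
    have key : ∀ j : ℕ, ∀ hj : j < k + 1, j ≤ gr (c ⟨j, hj⟩).1 := by
      intro j
      induction j with
      | zero => intro hj; exact Nat.zero_le _
      | succ j ihj =>
        intro hj
        have h1 := ihj (by omega)
        have h2 : Mlt (c ⟨j, by omega⟩) (c ⟨j + 1, hj⟩) :=
          hchain _ _ (Fin.mk_lt_mk.mpr (by omega))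
        have h3 := gr_strict h2
        omega
    have hk := key k (by omega)
    have hlast' : (⟨k, by omega⟩ : Fin (k + 1)) = Fin.last k := rfl
    rw [hlast', hlast] at hk
    exact hk

end Main

/-- `gr(α)` is the largest integer `k` such that there is a chain
`α = α_k > α_{k−1} > ⋯ > α₀` in `M`. -/
theorem stmt_8 (n : ℕ) (α : MMon n) :
    IsGreatest {k : ℕ | ∃ c : Fin (k + 1) → MMon n,
      c (Fin.last k) = α ∧ ∀ i j : Fin (k + 1), i < j → Mlt (c i) (c j)} (gr α.1) := by
  exact stmt_8' α
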